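/- (Phenomenological model, syndrome pair (1,1).) For every ρ ∈ M with Π₀ * ρ * Π₀ = ρ (a codespace-supported state), one has I₁(I₁(ρ)) = q² • Λ_I(Λ_I(ρ)) + (1−q) • Λ_{IX}(Λ_I(ρ)) + (1−q)·q • Λ_{IX}(Λ_{IX}(ρ)); i.e. the unnormalized channel p(1,1)·E^{(1,1)} conditioned on observed syndromes (1,1) equals q²Λ_I² + (1−q)Λ_{IX}Λ_I + (1−q)qΛ_{IX}². -/

import Mathlib

/-! The projectors `Π₀, Π₁` commute with `XX`, while `IX` and `IX·XX` swap them. Hence `Λ_I` keeps a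
state in its syndrome sector and `Λ_{IX}` moves it to the other one, so on a state supported in
sector `s` the instrument acts as `I_s = P⁰` and `I_{s+1} = P¹`. For `ρ` in the codespace (sector
`0`), the first `I₁` gives `P¹ρ = qΛ_Iρ + (1−q)Λ_{IX}ρ`, whose two parts lie in sectors `0` and `1`;
the second `I₁` acts as `P¹` on the first and as `P⁰` on the second. Since `XX` and `IX` commute,
so do `Λ_I` and `Λ_{IX}`, and collecting terms gives the formula. -/

open Matrix Kronecker

/-- `χ(s) = (-1)^s` for `s ∈ ZMod 2`, valued in `ℂ`. -/
noncomputable def chiC (s : ZMod 2) : ℂ := (-1 : ℂ) ^ s.val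

/-- The Pauli `X` matrix. -/
noncomputable def Xm : Matrix (Fin 2) (Fin 2) ℂ := !![0, 1; 1, 0]

/-- The Pauli `Z` matrix. -/
noncomputable def Zm : Matrix (Fin 2) (Fin 2) ℂ := !![1, 0; 0, -1]

/-- The two-qubit operator `X ⊗ X` (the logical `X̄` of the `[[2,1,1]]` code). -/
noncomputable def XX : Matrix (Fin 2 × Fin 2) (Fin 2 × Fin 2) ℂ := Xm ⊗ₖ Xm

/-- The two-qubit operator `I ⊗ X` (the pure error of the `[[2,1,1]]` code). -/
noncomputable def IX : Matrix (Fin 2 × Fin 2) (Fin 2 × Fin 2) ℂ :=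
  (1 : Matrix (Fin 2) (Fin 2) ℂ) ⊗ₖ Xm

/-- The two-qubit operator `Z ⊗ Z`. -/
noncomputable def ZZ : Matrix (Fin 2 × Fin 2) (Fin 2 × Fin 2) ℂ := Zm ⊗ₖ Zm

/-- Projector onto the `(-1)^{s+1}` "syndrome-`s`" eigenspace of the
stabilizer `−ZZ` of the `[[2,1,1]]` code: `Π_s = (1/2)(1 − (-1)^s ZZ)`. -/
noncomputable def Proj (s : ZMod 2) : Matrix (Fin 2 × Fin 2) (Fin 2 × Fin 2) ℂ :=
  (1 / 2 : ℂ) • (1 - chiC s • ZZ)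

/-- Trivial-syndrome part of the phenomenological data-qubit error channel:
`Λ_I(ρ) = (1−p)² ρ + p² XXρXX`. -/
noncomputable def LamI (p : ℝ) (ρ : Matrix (Fin 2 × Fin 2) (Fin 2 × Fin 2) ℂ) :
    Matrix (Fin 2 × Fin 2) (Fin 2 × Fin 2) ℂ :=
  ((1 - p) ^ 2) • ρ + (p ^ 2) • (XX * ρ * XX)

/-- Flipped-syndrome part of the phenomenological data-qubit error channel:
`Λ_{IX}(ρ) = (1−p)p (IX ρ IX + (IX·XX) ρ (XX·IX))`. -/
noncomputable def LamIX (p : ℝ) (ρ : Matrix (Fin 2 × Fin 2) (Fin 2 × Fin 2) ℂ) :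
    Matrix (Fin 2 × Fin 2) (Fin 2 × Fin 2) ℂ :=
  ((1 - p) * p) • (IX * ρ * IX + (IX * XX) * ρ * (XX * IX))

/-- `P⁰ = (1−q)Λ_I + qΛ_{IX}`, the internal errors compatible with a correctly
read syndrome. -/
noncomputable def P0 (p q : ℝ) (ρ : Matrix (Fin 2 × Fin 2) (Fin 2 × Fin 2) ℂ) :
    Matrix (Fin 2 × Fin 2) (Fin 2 × Fin 2) ℂ :=
  (1 - q) • LamI p ρ + q • LamIX p ρ

/-- `P¹ = qΛ_I + (1−q)Λ_{IX}`, the internal errors compatible with a flipped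
syndrome bit. -/
noncomputable def P1 (p q : ℝ) (ρ : Matrix (Fin 2 × Fin 2) (Fin 2 × Fin 2) ℂ) :
    Matrix (Fin 2 × Fin 2) (Fin 2 × Fin 2) ℂ :=
  q • LamI p ρ + (1 - q) • LamIX p ρ

/-- The noisy measurement instrument of the phenomenological model:
`I_s(ρ) = P⁰(Π_s ρ Π_s) + P¹(Π_{s+1} ρ Π_{s+1})`. -/
noncomputable def Inst (p q : ℝ) (s : ZMod 2)
    (ρ : Matrix (Fin 2 × Fin 2) (Fin 2 × Fin 2) ℂ) :
    Matrix (Fin 2 × Fin 2) (Fin 2 × Fin 2) ℂ :=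
  P0 p q (Proj s * ρ * Proj s) + P1 p q (Proj (s + 1) * ρ * Proj (s + 1))

section Kronecker

variable {α l m n o : Type*} [Mul α] [HasDistribNeg α]

theorem Matrix.neg_kronecker (A : Matrix l m α) (B : Matrix n o α) :
    (-A) ⊗ₖ B = -(A ⊗ₖ B) := by
  ext ⟨i, i'⟩ ⟨j, j'⟩
  simp [neg_mul]

theorem Matrix.kronecker_neg (A : Matrix l m α) (B : Matrix n o α) :
    A ⊗ₖ (-B) = -(A ⊗ₖ B) := by
  ext ⟨i, i'⟩ ⟨j, j'⟩
  simp [mul_neg]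

end Kronecker

theorem mul_sandwich_mul {S : Type*} [Semigroup S] {A B E F : S}
    (hE : A * E = E * B) (hF : F * A = B * F) (ρ : S) :
    A * (E * ρ * F) * A = E * (B * ρ * B) * F := by
  calc A * (E * ρ * F) * A = (A * E) * ρ * (F * A) := by simp only [mul_assoc]
    _ = E * (B * ρ * B) * F := by rw [hE, hF]; simp only [mul_assoc]

theorem Zm_mul_Zm : Zm * Zm = 1 := by
  simp [Zm, Matrix.one_fin_two]

theorem Zm_mul_Xm : Zm * Xm = -(Xm * Zm) := by
  simp [Xm, Zm]

theorem ZZ_mul_ZZ : ZZ * ZZ = 1 := by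
  rw [ZZ, ← mul_kronecker_mul, Zm_mul_Zm, one_kronecker_one]

theorem commute_XX_IX : Commute XX IX := by
  simp only [Commute, SemiconjBy, XX, IX, ← mul_kronecker_mul, mul_one, one_mul]

theorem commute_ZZ_XX : Commute ZZ XX := by
  simp only [Commute, SemiconjBy, ZZ, XX, ← mul_kronecker_mul, Zm_mul_Xm, neg_kronecker,
    kronecker_neg, neg_neg]

theorem ZZ_mul_IX : ZZ * IX = -(IX * ZZ) := by
  rw [ZZ, IX, ← mul_kronecker_mul, ← mul_kronecker_mul, mul_one, one_mul, Zm_mul_Xm,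
    kronecker_neg]

theorem ZMod.add_one_add_one (s : ZMod 2) : s + 1 + 1 = s := by
  rw [add_assoc, show (1 + 1 : ZMod 2) = 0 from rfl, add_zero]

theorem chiC_add_one (s : ZMod 2) : chiC (s + 1) = -chiC s := by
  obtain rfl | rfl : s = 0 ∨ s = 1 := by decide +revert
  · simp [chiC, ZMod.val_one]
  · simp [chiC, ZMod.val_one, show (1 + 1 : ZMod 2) = 0 from rfl]

theorem chiC_mul_self (s : ZMod 2) : chiC s * chiC s = 1 := by
  simp [chiC, ← pow_add, ← two_mul, pow_mul]

theorem Proj_mul_Proj_add_one (s : ZMod 2) : Proj s * Proj (s + 1) = 0 := by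
  simp only [Proj, chiC_add_one, smul_mul_smul_comm, sub_mul, mul_sub, one_mul, mul_one,
    ZZ_mul_ZZ, neg_smul, mul_neg, chiC_mul_self, one_smul]
  module

theorem commute_Proj_XX (s : ZMod 2) : Commute (Proj s) XX :=
  ((Commute.one_left XX).sub_left (commute_ZZ_XX.smul_left _)).smul_left _

theorem Proj_mul_IX (s : ZMod 2) : Proj s * IX = IX * Proj (s + 1) := by
  simp only [Proj, chiC_add_one, neg_smul, sub_neg_eq_add, smul_mul_assoc, mul_smul_comm, sub_mul,
    mul_add, one_mul, mul_one, ZZ_mul_IX, smul_neg]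

theorem IX_mul_Proj (s : ZMod 2) : IX * Proj s = Proj (s + 1) * IX := by
  rw [Proj_mul_IX, ZMod.add_one_add_one]

section Channels

variable (p q : ℝ) {s : ZMod 2} {ρ σ : Matrix (Fin 2 × Fin 2) (Fin 2 × Fin 2) ℂ}

theorem LamI_add : LamI p (ρ + σ) = LamI p ρ + LamI p σ := by
  simp only [LamI, add_mul, mul_add, smul_add]
  abel

theorem LamI_smul (r : ℝ) : LamI p (r • ρ) = r • LamI p ρ := by
  simp only [LamI, Matrix.mul_smul, Matrix.smul_mul, smul_add, smul_comm r]

theorem LamIX_add : LamIX p (ρ + σ) = LamIX p ρ + LamIX p σ := by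
  simp only [LamIX, add_mul, mul_add, smul_add]
  abel

theorem LamIX_smul (r : ℝ) : LamIX p (r • ρ) = r • LamIX p ρ := by
  simp only [LamIX, Matrix.mul_smul, Matrix.smul_mul, smul_add, smul_comm r]

theorem Inst_add : Inst p q s (ρ + σ) = Inst p q s ρ + Inst p q s σ := by
  simp only [Inst, P0, P1, add_mul, mul_add, LamI_add, LamIX_add, smul_add]
  abel

theorem Inst_smul (r : ℝ) : Inst p q s (r • ρ) = r • Inst p q s ρ := by
  simp only [Inst, P0, P1, Matrix.mul_smul, Matrix.smul_mul, LamI_smul, LamIX_smul, smul_add,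
    smul_comm r]

theorem LamI_sandwich {E F : Matrix (Fin 2 × Fin 2) (Fin 2 × Fin 2) ℂ} (hE : Commute XX E)
    (hF : Commute XX F) :
    LamI p (E * ρ * F) = E * LamI p ρ * F := by
  simp only [LamI, mul_add, add_mul, Matrix.mul_smul, Matrix.smul_mul,
    mul_sandwich_mul hE.eq hF.eq.symm]

theorem LamI_LamIX_comm : LamI p (LamIX p ρ) = LamIX p (LamI p ρ) := by
  rw [LamIX, LamIX, LamI_smul, LamI_add,
    LamI_sandwich p commute_XX_IX commute_XX_IX,
    LamI_sandwich p (commute_XX_IX.mul_right (Commute.refl XX))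
      ((Commute.refl XX).mul_right commute_XX_IX)]

theorem Proj_sandwich_LamI :
    Proj s * LamI p ρ * Proj s = LamI p (Proj s * ρ * Proj s) := by
  simp only [LamI, mul_add, add_mul, Matrix.mul_smul, Matrix.smul_mul,
    mul_sandwich_mul (commute_Proj_XX s).eq (commute_Proj_XX s).eq.symm]

theorem Proj_sandwich_LamIX :
    Proj s * LamIX p ρ * Proj s = LamIX p (Proj (s + 1) * ρ * Proj (s + 1)) := by
  have hE : Proj s * (IX * XX) = IX * XX * Proj (s + 1) := by
    rw [← mul_assoc, Proj_mul_IX, mul_assoc, (commute_Proj_XX _).eq, mul_assoc]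
  have hF : XX * IX * Proj s = Proj (s + 1) * (XX * IX) := by
    rw [mul_assoc, IX_mul_Proj, ← mul_assoc, ← (commute_Proj_XX _).eq, mul_assoc]
  simp only [LamIX, mul_add, add_mul, Matrix.mul_smul, Matrix.smul_mul,
    mul_sandwich_mul (Proj_mul_IX s) (IX_mul_Proj s), mul_sandwich_mul hE hF]

def IsSupportedIn (s : ZMod 2) (ρ : Matrix (Fin 2 × Fin 2) (Fin 2 × Fin 2) ℂ) : Prop :=
  Proj s * ρ * Proj s = ρ

namespace IsSupportedIn

theorem Proj_add_one_sandwich_eq_zero (h : IsSupportedIn s ρ) :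
    Proj (s + 1) * ρ * Proj (s + 1) = 0 := by
  have h' : Proj (s + 1) * Proj s = 0 := by
    simpa only [ZMod.add_one_add_one] using Proj_mul_Proj_add_one (s + 1)
  rw [← h]
  simp only [← mul_assoc, h', zero_mul]

theorem LamI (h : IsSupportedIn s ρ) : IsSupportedIn s (LamI p ρ) := by
  rw [IsSupportedIn, Proj_sandwich_LamI, h]

theorem LamIX (h : IsSupportedIn s ρ) : IsSupportedIn (s + 1) (LamIX p ρ) := by
  rw [IsSupportedIn, Proj_sandwich_LamIX, ZMod.add_one_add_one, h]

end IsSupportedIn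

theorem Inst_eq_P0_of_isSupportedIn (h : IsSupportedIn s ρ) :
    Inst p q s ρ = P0 p q ρ := by
  rw [Inst, h, h.Proj_add_one_sandwich_eq_zero]
  simp [P1, LamI, LamIX]

theorem Inst_add_one_eq_P1_of_isSupportedIn (h : IsSupportedIn s ρ) :
    Inst p q (s + 1) ρ = P1 p q ρ := by
  rw [Inst, ZMod.add_one_add_one, h, h.Proj_add_one_sandwich_eq_zero]
  simp [P0, LamI, LamIX]

end Channels

/-- Phenomenological model, syndrome pair `(1,1)`: on a codespace-supported
state, `I₁(I₁(ρ)) = q²Λ_I² + (1−q)Λ_{IX}Λ_I + (1−q)qΛ_{IX}²` applied to `ρ`. -/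
theorem phenomenological_syndrome_pair_11 (p q : ℝ)
    (ρ : Matrix (Fin 2 × Fin 2) (Fin 2 × Fin 2) ℂ)
    (hρ : Proj 0 * ρ * Proj 0 = ρ) :
    Inst p q 1 (Inst p q 1 ρ)
      = (q ^ 2) • LamI p (LamI p ρ) + (1 - q) • LamIX p (LamI p ρ)
          + ((1 - q) * q) • LamIX p (LamIX p ρ) := by
  have hsupp : IsSupportedIn 0 ρ := hρ
  have hI : Inst p q 1 (LamI p ρ) = P1 p q (LamI p ρ) := by
    simpa only [zero_add] using Inst_add_one_eq_P1_of_isSupportedIn p q (hsupp.LamI p)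
  have hX : Inst p q 1 (LamIX p ρ) = P0 p q (LamIX p ρ) :=
    Inst_eq_P0_of_isSupportedIn p q (by simpa only [zero_add] using hsupp.LamIX p)
  have hfirst : Inst p q 1 ρ = P1 p q ρ := by
    simpa only [zero_add] using Inst_add_one_eq_P1_of_isSupportedIn p q hsupp
  rw [hfirst, P1, Inst_add, Inst_smul, Inst_smul, hI, hX, P0, P1, LamI_LamIX_comm]
  module
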